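/- arXiv:2411.14603 — 7 statements merged into one kernel-verified Lean document; each statement's English description precedes it below -/
import Mathlib

section
/- The region Ω = {(L,P,A₁,A₂) ∈ ℝ⁴₊ : L ≤ b/(e·c₁), P ≤ (1-μ_l)·b/(e·c₁), A₁ ≤ (1-μ_l)(1-μ_p)·b/(e·c₁)} is forward invariant under the LPAA map in its first three coordinates: if the state lies in Ω at time t, then the L, P, A₁ coordinates at time t+1 also satisfy these bounds. -/
open Real

-- The Ricker recruitment `b x e^{-c x}` is maximal at `x = 1/c`.
theorem mul_mul_exp_neg_mul_le {b c : ℝ} (hb : 0 ≤ b) (hc : 0 < c) (x : ℝ) :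
    b * x * exp (-c * x) ≤ b / (exp 1 * c) := by
  have hpeak : c * x * exp (-(c * x)) ≤ (exp 1)⁻¹ := by
    simpa only [exp_neg] using mul_exp_neg_le_exp_neg_one (c * x)
  calc b * x * exp (-c * x) = b / c * (c * x * exp (-(c * x))) := by
        field_simp
    _ ≤ b / c * (exp 1)⁻¹ := by gcongr
    _ = b / (exp 1 * c) := by field_simp

theorem stmt_4_general (b c₁ μl μp : ℝ)
    (hb : 0 < b) (hc₁ : 0 < c₁)
    (hμl : μl ∈ Set.Ioo (0:ℝ) 1) (hμp : μp ∈ Set.Ioo (0:ℝ) 1)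
    (L P A₂ : ℝ)
    (hLb : L ≤ b / (Real.exp 1 * c₁))
    (hPb : P ≤ (1 - μl) * b / (Real.exp 1 * c₁)) :
    b * A₂ * Real.exp (-c₁ * A₂) ≤ b / (Real.exp 1 * c₁) ∧
    (1 - μl) * L ≤ (1 - μl) * b / (Real.exp 1 * c₁) ∧
    (1 - μp) * P ≤ (1 - μl) * (1 - μp) * b / (Real.exp 1 * c₁) := by
  have hsurv_l : 0 ≤ 1 - μl := by linarith [hμl.2]
  have hsurv_p : 0 ≤ 1 - μp := by linarith [hμp.2]
  refine ⟨mul_mul_exp_neg_mul_le hb.le hc₁ A₂, ?_, ?_⟩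
  · rw [mul_div_assoc]
    exact mul_le_mul_of_nonneg_left hLb hsurv_l
  · rw [mul_comm (1 - μl), mul_assoc, mul_div_assoc]
    exact mul_le_mul_of_nonneg_left hPb hsurv_p

theorem stmt_4 (b c₁ c₂ μl μp μa : ℝ)
    (hb : 0 < b) (hc₁ : 0 < c₁) (hc₂ : 0 ≤ c₂)
    (hμl : μl ∈ Set.Ioo (0:ℝ) 1) (hμp : μp ∈ Set.Ioo (0:ℝ) 1) (hμa : μa ∈ Set.Ioo (0:ℝ) 1)
    (L P A₁ A₂ : ℝ)
    (hLnn : 0 ≤ L) (hPnn : 0 ≤ P) (hA₁nn : 0 ≤ A₁) (hA₂nn : 0 ≤ A₂)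
    (hLb : L ≤ b / (Real.exp 1 * c₁))
    (hPb : P ≤ (1 - μl) * b / (Real.exp 1 * c₁))
    (hA₁b : A₁ ≤ (1 - μl) * (1 - μp) * b / (Real.exp 1 * c₁)) :
    b * A₂ * Real.exp (-c₁ * A₂) ≤ b / (Real.exp 1 * c₁) ∧
    (1 - μl) * L ≤ (1 - μl) * b / (Real.exp 1 * c₁) ∧
    (1 - μp) * P ≤ (1 - μl) * (1 - μp) * b / (Real.exp 1 * c₁) :=
  stmt_4_general b c₁ μl μp hb hc₁ hμl hμp L P A₂ hLb hPb
end

section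
/- Define R₀ = b(1-μ_l)(1-μ_p)/μ_a. The LPAA map has a fixed point with all coordinates strictly positive if and only if R₀ > 1; moreover, in that case the positive fixed point is unique and its A₂-coordinate equals (1/(c₁+c₂))·ln(R₀). -/
open Real

theorem stmt_5 (b c₁ c₂ μl μp μa : ℝ)
    (hb : 0 < b) (hc₁ : 0 < c₁) (hc₂ : 0 < c₂)
    (hμl : μl ∈ Set.Ioo (0:ℝ) 1) (hμp : μp ∈ Set.Ioo (0:ℝ) 1) (hμa : μa ∈ Set.Ioo (0:ℝ) 1)
    (R₀ : ℝ) (hR₀ : R₀ = b * (1 - μl) * (1 - μp) / μa)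
    (isFixed : ℝ × ℝ × ℝ × ℝ → Prop)
    (hFixed : ∀ p : ℝ × ℝ × ℝ × ℝ, isFixed p ↔
      (0 < p.1 ∧ 0 < p.2.1 ∧ 0 < p.2.2.1 ∧ 0 < p.2.2.2 ∧
       p.1 = b * p.2.2.2 * Real.exp (-c₁ * p.2.2.2) ∧
       p.2.1 = (1 - μl) * p.1 ∧
       p.2.2.1 = (1 - μp) * p.2.1 ∧
       p.2.2.2 = p.2.2.1 * Real.exp (-c₂ * p.2.2.2) + (1 - μa) * p.2.2.2)) :
    ((∃ p, isFixed p) ↔ 1 < R₀) ∧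
    (1 < R₀ → ∃! p, isFixed p ∧ p.2.2.2 = (1 / (c₁ + c₂)) * Real.log R₀) := by
  obtain ⟨hμl0, hμl1⟩ := hμl
  obtain ⟨hμp0, hμp1⟩ := hμp
  obtain ⟨hμa0, hμa1⟩ := hμa
  have h1l : (0:ℝ) < 1 - μl := by linarith
  have h1p : (0:ℝ) < 1 - μp := by linarith
  have hcc : 0 < c₁ + c₂ := by linarith
  have hC : 0 < b * (1 - μl) * (1 - μp) := by positivity
  have hμaC : μa = R₀⁻¹ * (b * (1 - μl) * (1 - μp)) := by
    rw [hR₀, inv_div]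
    field_simp
  have key : ∀ p, isFixed p → R₀ = Real.exp ((c₁ + c₂) * p.2.2.2) := by
    intro p hp
    rw [hFixed] at hp
    obtain ⟨hL, hP, hA1, hA, eL, eP, eA1, eA⟩ := hp
    have h1 : μa * p.2.2.2 = p.2.2.1 * Real.exp (-c₂ * p.2.2.2) := by linarith
    have h2 : μa * p.2.2.2 =
        (b * (1 - μl) * (1 - μp) * Real.exp (-((c₁ + c₂) * p.2.2.2))) * p.2.2.2 := by
      rw [h1, eA1, eP, eL,
        show -((c₁ + c₂) * p.2.2.2) = -c₁ * p.2.2.2 + -c₂ * p.2.2.2 by ring, Real.exp_add]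
      ring
    have h3 : μa = b * (1 - μl) * (1 - μp) * Real.exp (-((c₁ + c₂) * p.2.2.2)) :=
      mul_right_cancel₀ (ne_of_gt hA) h2
    rw [hR₀, h3, Real.exp_neg]
    have hene : Real.exp ((c₁ + c₂) * p.2.2.2) ≠ 0 := Real.exp_ne_zero _
    field_simp
  have construct : 1 < R₀ →
      ∃ p, isFixed p ∧ p.2.2.2 = (1 / (c₁ + c₂)) * Real.log R₀ := by
    intro hR1
    have hlog : 0 < Real.log R₀ := Real.log_pos hR1
    set A : ℝ := (1 / (c₁ + c₂)) * Real.log R₀ with hAdef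
    have hApos : 0 < A := by positivity
    have hccA : (c₁ + c₂) * A = Real.log R₀ := by
      rw [hAdef]; field_simp
    have hexp : Real.exp ((c₁ + c₂) * A) = R₀ := by
      rw [hccA, Real.exp_log (by linarith)]
    set L : ℝ := b * A * Real.exp (-c₁ * A) with hLdef
    set P : ℝ := (1 - μl) * L with hPdef
    set A₁ : ℝ := (1 - μp) * P with hA1def
    have hLpos : 0 < L := by rw [hLdef]; positivity
    have hPpos : 0 < P := by rw [hPdef]; exact mul_pos h1l hLpos
    have hA1pos : 0 < A₁ := by rw [hA1def]; exact mul_pos h1p hPpos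
    refine ⟨(L, P, A₁, A), (hFixed _).2 ⟨hLpos, hPpos, hA1pos, hApos, rfl, rfl, rfl, ?_⟩, rfl⟩
    show A = A₁ * Real.exp (-c₂ * A) + (1 - μa) * A
    have hmul : Real.exp (-c₁ * A) * Real.exp (-c₂ * A) = (Real.exp ((c₁ + c₂) * A))⁻¹ := by
      rw [← Real.exp_add, show -c₁ * A + -c₂ * A = -((c₁ + c₂) * A) by ring, Real.exp_neg]
    have hkey : A₁ * Real.exp (-c₂ * A) = μa * A := by
      rw [hA1def, hPdef, hLdef, hμaC, ← hexp]
      calc (1 - μp) * ((1 - μl) * (b * A * Real.exp (-c₁ * A))) * Real.exp (-c₂ * A)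
          = b * (1 - μl) * (1 - μp) * A * (Real.exp (-c₁ * A) * Real.exp (-c₂ * A)) := by ring
        _ = b * (1 - μl) * (1 - μp) * A * (Real.exp ((c₁ + c₂) * A))⁻¹ := by rw [hmul]
        _ = (Real.exp ((c₁ + c₂) * A))⁻¹ * (b * (1 - μl) * (1 - μp)) * A := by ring
    linarith
  constructor
  · constructor
    · rintro ⟨p, hp⟩
      have hk := key p hp
      have hA : 0 < p.2.2.2 := ((hFixed p).1 hp).2.2.2.1
      rw [hk]
      calc (1:ℝ) = Real.exp 0 := (Real.exp_zero).symm
        _ < Real.exp ((c₁ + c₂) * p.2.2.2) := Real.exp_lt_exp.2 (by positivity)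
    · intro hR1
      obtain ⟨p, hp, _⟩ := construct hR1
      exact ⟨p, hp⟩
  · intro hR1
    obtain ⟨p, hp, hpA⟩ := construct hR1
    refine ⟨p, ⟨hp, hpA⟩, ?_⟩
    rintro ⟨qL, qP, qA1, qA⟩ ⟨hq, hqA⟩
    have hq' := (hFixed _).1 hq
    obtain ⟨_, _, _, _, eL, eP, eA1, _⟩ := hq'
    have hp' := (hFixed _).1 hp
    obtain ⟨_, _, _, _, fL, fP, fA1, _⟩ := hp'
    obtain ⟨pL, pP, pA1, pA⟩ := p
    simp only at hqA eL eP eA1 fL fP fA1 hpA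
    have hA' : qA = pA := by rw [hqA, hpA]
    have hL' : qL = pL := by rw [eL, hA', fL]
    have hP' : qP = pP := by rw [eP, hL', fP]
    have hA1' : qA1 = pA1 := by rw [eA1, hP', fA1]
    simp [hL', hP', hA1', hA']
end

section
/- The characteristic polynomial of the inherent projection matrix M (the Jacobian of the LPAA map at the origin) is λ⁴ - (1-μ_a)λ³ - b(1-μ_l)(1-μ_p), and M has an eigenvalue of modulus at least 1 greater than or equal to 1 if and only if R₀ = b(1-μ_l)(1-μ_p)/μ_a ≥ 1. In particular, all eigenvalues of M have modulus strictly less than 1 if and only if R₀ < 1. -/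
/-! Expanding the determinant gives the characteristic polynomial λ⁴ - aλ³ - c with
a = 1 - μ_a and c = b(1-μ_l)(1-μ_p), and R₀ ≥ 1 means a + c ≥ 1. For nonnegative a, c,
a root z with |z| ≥ 1 gives |z|⁴ ≤ (a + c)|z|³, hence 1 ≤ |z| ≤ a + c; conversely, if
a + c ≥ 1, the intermediate value theorem yields a real root in [1, a + c]. -/

open Polynomial

theorem charpoly_cyclic_four {R : Type*} [CommRing R] (a b p q r : R) :
    (!![0, 0, 0, b; p, 0, 0, 0; 0, q, 0, 0; 0, 0, r, a] : Matrix (Fin 4) (Fin 4) R).charpoly =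
      X ^ 4 - C a * X ^ 3 - C (b * p * q * r) := by
  rw [Matrix.charpoly, Matrix.det_succ_row_zero]
  simp [Fin.sum_univ_succ, Matrix.det_fin_three, Fin.succAbove, Matrix.charmatrix_apply]
  ring

theorem exists_root_one_le_norm_iff {a c : ℝ} (ha : 0 ≤ a) (hc : 0 ≤ c) (n : ℕ) :
    (∃ z : ℂ, z ^ (n + 1) = a * z ^ n + c ∧ 1 ≤ ‖z‖) ↔ 1 ≤ a + c := by
  constructor
  · rintro ⟨z, hz, hz1⟩
    have hzn : 0 < ‖z‖ ^ n := by positivity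
    have hbound : ‖z‖ ^ n * ‖z‖ ≤ ‖z‖ ^ n * (a + c) := calc
      ‖z‖ ^ n * ‖z‖ = ‖a * z ^ n + c‖ := by rw [← hz, norm_pow, pow_succ]
      _ ≤ a * ‖z‖ ^ n + c := by
        refine (norm_add_le _ _).trans ?_
        simp [abs_of_nonneg ha, abs_of_nonneg hc]
      _ ≤ ‖z‖ ^ n * (a + c) := by nlinarith [one_le_pow₀ (n := n) hz1]
    exact hz1.trans (le_of_mul_le_mul_left hbound hzn)
  · intro h
    -- f(x) = x^(n+1) - a x^n - c satisfies f(1) = 1 - (a + c) ≤ 0 ≤ c((a + c)^n - 1) = f(a + c)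
    have hf : (0 : ℝ) ∈ Set.Icc (1 ^ (n + 1) - a * 1 ^ n - c)
        ((a + c) ^ (n + 1) - a * (a + c) ^ n - c) := by
      constructor
      · simp only [one_pow]; linarith
      · rw [pow_succ]; nlinarith [one_le_pow₀ (n := n) h]
    obtain ⟨x, hx, hfx⟩ := intermediate_value_Icc h
      (f := fun x : ℝ => x ^ (n + 1) - a * x ^ n - c) (by fun_prop) hf
    refine ⟨x, ?_, ?_⟩
    · exact_mod_cast (sub_eq_zero.mp (by linarith [hfx]) : x ^ (n + 1) = a * x ^ n + c)
    · rw [Complex.norm_real, Real.norm_eq_abs]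
      exact hx.1.trans (le_abs_self x)

theorem stmt_8 (b μl μp μa : ℝ) (hb : 0 < b)
    (hμl : μl ∈ Set.Ioo (0:ℝ) 1) (hμp : μp ∈ Set.Ioo (0:ℝ) 1) (hμa : μa ∈ Set.Ioo (0:ℝ) 1)
    (M : Matrix (Fin 4) (Fin 4) ℝ)
    (hM : M = !![0, 0, 0, b;
                 1 - μl, 0, 0, 0;
                 0, 1 - μp, 0, 0;
                 0, 0, 1, 1 - μa])
    (R₀ : ℝ) (hR₀ : R₀ = b * (1 - μl) * (1 - μp) / μa) :
    M.charpoly = X ^ 4 - C (1 - μa) * X ^ 3 - C (b * (1 - μl) * (1 - μp)) ∧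
    ((∃ z : ℂ, (M.charpoly.map (algebraMap ℝ ℂ)).IsRoot z ∧ 1 ≤ ‖z‖) ↔ 1 ≤ R₀) ∧
    ((∀ z : ℂ, (M.charpoly.map (algebraMap ℝ ℂ)).IsRoot z → ‖z‖ < 1) ↔ R₀ < 1) := by
  set c := b * (1 - μl) * (1 - μp)
  have hcharpoly : M.charpoly = X ^ 4 - C (1 - μa) * X ^ 3 - C c := by
    rw [hM, charpoly_cyclic_four, mul_one]
  have hc : 0 ≤ c := mul_nonneg (mul_nonneg hb.le (by linarith [hμl.2])) (by linarith [hμp.2])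
  have hR₀ : 1 ≤ R₀ ↔ 1 ≤ (1 - μa) + c := by
    rw [hR₀, le_div_iff₀ hμa.1]
    constructor <;> intro h <;> linarith
  have hroot (z : ℂ) : (M.charpoly.map (algebraMap ℝ ℂ)).IsRoot z ↔
      z ^ (3 + 1) = ((1 - μa : ℝ) : ℂ) * z ^ 3 + (c : ℂ) := by
    rw [hcharpoly, IsRoot, eval_map_algebraMap]
    simp only [aeval_sub, aeval_X_pow, aeval_mul, aeval_C, Complex.coe_algebraMap]
    constructor <;> intro h <;> linear_combination h
  have hunstable : (∃ z : ℂ, (M.charpoly.map (algebraMap ℝ ℂ)).IsRoot z ∧ 1 ≤ ‖z‖) ↔ 1 ≤ R₀ := by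
    simpa only [hroot, hR₀] using exists_root_one_le_norm_iff (by linarith [hμa.2]) hc 3
  refine ⟨hcharpoly, hunstable, ?_⟩
  simpa only [not_exists, not_and, not_le] using hunstable.not
end

section
/- If R₀ = b(1-μ_l)(1-μ_p)/μ_a < 1, then for every solution of the LPAA map with nonnegative initial data, all four coordinates tend to 0 as t → ∞ (global asymptotic stability of the extinction equilibrium). -/
open Real Filter

/-
Proof idea: nonnegative orbits stay nonnegative, and since the exponential factors are at most 1,
the weighted total population `A₂ + A₁ + (1 - μp) P + (1 - μp)(1 - μl) L` loses at least
`(μa - b (1 - μl)(1 - μp)) A₂ t` per step. The hypothesis `R₀ < 1` makes this coefficient positive,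
so `∑ A₂ t` is bounded, hence `A₂ → 0`; the other stages follow because each is at most a constant
times an earlier value of `A₂`.
-/

theorem tendsto_atTop_zero_of_succ_add_le {V a : ℕ → ℝ} (hV : ∀ n, 0 ≤ V n)
    (ha : ∀ n, 0 ≤ a n) (h : ∀ n, V (n + 1) + a n ≤ V n) : Tendsto a atTop (nhds 0) := by
  refine (summable_of_sum_range_le ha (c := V 0) fun n => ?_).tendsto_atTop_zero
  calc ∑ i ∈ Finset.range n, a i ≤ ∑ i ∈ Finset.range n, (V i - V (i + 1)) :=
        Finset.sum_le_sum fun i _ => by linarith [h i]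
    _ = V 0 - V n := Finset.sum_range_sub' V n
    _ ≤ V 0 := by linarith [hV n]

structure IsLPAAOrbit (b c₁ c₂ μl μp μa : ℝ) (L P A₁ A₂ : ℕ → ℝ) : Prop where
  L_succ : ∀ t, L (t + 1) = b * A₂ t * exp (-c₁ * A₂ t)
  P_succ : ∀ t, P (t + 1) = (1 - μl) * L t
  A₁_succ : ∀ t, A₁ (t + 1) = (1 - μp) * P t
  A₂_succ : ∀ t, A₂ (t + 1) = A₁ t * exp (-c₂ * A₂ t) + (1 - μa) * A₂ t

namespace IsLPAAOrbit

variable {b c₁ c₂ μl μp μa : ℝ} {L P A₁ A₂ : ℕ → ℝ}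

theorem nonneg (h : IsLPAAOrbit b c₁ c₂ μl μp μa L P A₁ A₂) (hb : 0 ≤ b)
    (hμl : μl ≤ 1) (hμp : μp ≤ 1) (hμa : μa ≤ 1)
    (h0 : 0 ≤ L 0 ∧ 0 ≤ P 0 ∧ 0 ≤ A₁ 0 ∧ 0 ≤ A₂ 0) (t : ℕ) :
    0 ≤ L t ∧ 0 ≤ P t ∧ 0 ≤ A₁ t ∧ 0 ≤ A₂ t := by
  have : 0 ≤ 1 - μl := by linarith
  have : 0 ≤ 1 - μp := by linarith
  have : 0 ≤ 1 - μa := by linarith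
  induction t with
  | zero => exact h0
  | succ t ih =>
    obtain ⟨hL, hP, hA₁, hA₂⟩ := ih
    rw [h.L_succ, h.P_succ, h.A₁_succ, h.A₂_succ]
    refine ⟨?_, ?_, ?_, ?_⟩ <;> positivity

theorem L_succ_le (h : IsLPAAOrbit b c₁ c₂ μl μp μa L P A₁ A₂) (hb : 0 ≤ b) (hc₁ : 0 ≤ c₁)
    {t : ℕ} (hA₂ : 0 ≤ A₂ t) : L (t + 1) ≤ b * A₂ t := by
  rw [h.L_succ]
  exact mul_le_of_le_one_right (by positivity) (exp_le_one_iff.2 (by nlinarith))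

/-- The weight of each stage is the fraction of it that survives to adulthood. -/
def energy (μl μp : ℝ) (L P A₁ A₂ : ℕ → ℝ) (t : ℕ) : ℝ :=
  A₂ t + A₁ t + (1 - μp) * P t + (1 - μp) * (1 - μl) * L t

theorem energy_succ_add_le (h : IsLPAAOrbit b c₁ c₂ μl μp μa L P A₁ A₂) (hb : 0 ≤ b)
    (hc₁ : 0 ≤ c₁) (hc₂ : 0 ≤ c₂) (hμl : μl ≤ 1) (hμp : μp ≤ 1) {t : ℕ}
    (hA₁ : 0 ≤ A₁ t) (hA₂ : 0 ≤ A₂ t) :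
    energy μl μp L P A₁ A₂ (t + 1) + (μa - b * (1 - μl) * (1 - μp)) * A₂ t
      ≤ energy μl μp L P A₁ A₂ t := by
  have hL := h.L_succ_le hb hc₁ hA₂
  have hA₁e : A₁ t * exp (-c₂ * A₂ t) ≤ A₁ t :=
    mul_le_of_le_one_right hA₁ (exp_le_one_iff.2 (by nlinarith))
  have hw : 0 ≤ (1 - μp) * (1 - μl) := mul_nonneg (by linarith) (by linarith)
  have := mul_le_mul_of_nonneg_left hL hw
  simp only [energy, h.P_succ, h.A₁_succ, h.A₂_succ]
  nlinarith

theorem tendsto_A₂ (h : IsLPAAOrbit b c₁ c₂ μl μp μa L P A₁ A₂) (hb : 0 ≤ b)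
    (hc₁ : 0 ≤ c₁) (hc₂ : 0 ≤ c₂) (hμl : μl ≤ 1) (hμp : μp ≤ 1) (hμa : μa ≤ 1)
    (hR₀ : b * (1 - μl) * (1 - μp) < μa)
    (h0 : 0 ≤ L 0 ∧ 0 ≤ P 0 ∧ 0 ≤ A₁ 0 ∧ 0 ≤ A₂ 0) : Tendsto A₂ atTop (nhds 0) := by
  have hnn := h.nonneg hb hμl hμp hμa h0
  have hdecay : Tendsto (fun t => (μa - b * (1 - μl) * (1 - μp)) * A₂ t) atTop (nhds 0) := by
    refine tendsto_atTop_zero_of_succ_add_le (fun t => ?_) (fun t => ?_)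
      (fun t => h.energy_succ_add_le hb hc₁ hc₂ hμl hμp (hnn t).2.2.1 (hnn t).2.2.2)
    · obtain ⟨hL, hP, hA₁, hA₂⟩ := hnn t
      have : 0 ≤ 1 - μl := by linarith
      have : 0 ≤ 1 - μp := by linarith
      unfold energy
      positivity
    · exact mul_nonneg (by linarith) (hnn t).2.2.2
  simpa [← mul_assoc, inv_mul_cancel₀ (sub_pos.2 hR₀).ne'] using
    hdecay.const_mul (μa - b * (1 - μl) * (1 - μp))⁻¹

end IsLPAAOrbit

theorem stmt_9 (b c₁ c₂ μl μp μa : ℝ)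
    (hb : 0 < b) (hc₁ : 0 ≤ c₁) (hc₂ : 0 ≤ c₂)
    (hμl : μl ∈ Set.Ioo (0:ℝ) 1) (hμp : μp ∈ Set.Ioo (0:ℝ) 1) (hμa : μa ∈ Set.Ioo (0:ℝ) 1)
    (hR₀ : b * (1 - μl) * (1 - μp) / μa < 1)
    (L P A₁ A₂ : ℕ → ℝ)
    (hL : ∀ t, L (t + 1) = b * A₂ t * Real.exp (-c₁ * A₂ t))
    (hP : ∀ t, P (t + 1) = (1 - μl) * L t)
    (hA₁ : ∀ t, A₁ (t + 1) = (1 - μp) * P t)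
    (hA₂ : ∀ t, A₂ (t + 1) = A₁ t * Real.exp (-c₂ * A₂ t) + (1 - μa) * A₂ t)
    (h0 : 0 ≤ L 0 ∧ 0 ≤ P 0 ∧ 0 ≤ A₁ 0 ∧ 0 ≤ A₂ 0) :
    Tendsto L atTop (nhds 0) ∧ Tendsto P atTop (nhds 0) ∧
    Tendsto A₁ atTop (nhds 0) ∧ Tendsto A₂ atTop (nhds 0) := by
  have h : IsLPAAOrbit b c₁ c₂ μl μp μa L P A₁ A₂ := ⟨hL, hP, hA₁, hA₂⟩
  have hnn := h.nonneg hb.le hμl.2.le hμp.2.le hμa.2.le h0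
  have hA₂0 := h.tendsto_A₂ hb.le hc₁ hc₂ hμl.2.le hμp.2.le hμa.2.le
    ((div_lt_one hμa.1).1 hR₀) h0
  have hL0 : Tendsto L atTop (nhds 0) := (tendsto_add_atTop_iff_nat 1).1 <|
    squeeze_zero (fun t => (hnn _).1) (fun t => h.L_succ_le hb.le hc₁ (hnn t).2.2.2)
      (by simpa using hA₂0.const_mul b)
  have hP0 : Tendsto P atTop (nhds 0) := (tendsto_add_atTop_iff_nat 1).1 <| by
    simpa [hP] using hL0.const_mul (1 - μl)
  have hA₁0 : Tendsto A₁ atTop (nhds 0) := (tendsto_add_atTop_iff_nat 1).1 <| by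
    simpa [hA₁] using hP0.const_mul (1 - μp)
  exact ⟨hL0, hP0, hA₁0, hA₂0⟩
end

section
/- Let β = b(1-μ_l)(1-μ_p) and consider the delay map x_{t+1} = (1-μ_a)x_t + β·x_{t-3}·exp(-c₁x_{t-3} - c₂x_t). Every nonnegative solution satisfies limsup_{t→∞} x_t ≤ β/(e·c₁·μ_a), provided c₁ > 0 and μ_a ∈ (0,1). -/
/-!
The factor `x e^{-c₁ x}` is at most `1/(e c₁)` and the factor `e^{-c₂ x}` at most `1`, so every
solution obeys the first-order inequality `x_{t+4} ≤ (1 - μₐ) x_{t+3} + β/(e c₁)`. Comparing with the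
geometric recursion `v_{n+1} = a v_n + b`, whose solutions tend to its fixed point `b/(1-a)`, bounds
the limsup by `β/(e c₁ μₐ)`.
-/

open Real Filter

lemma Real.mul_exp_neg_mul_le {c : ℝ} (hc : 0 < c) (y : ℝ) :
    y * exp (-(c * y)) ≤ 1 / (exp 1 * c) := by
  have h := mul_exp_neg_le_exp_neg_one (c * y)
  rw [exp_neg 1, ← one_div] at h
  rw [← div_div, le_div_iff₀ hc]
  linarith

section AffineRecursion

variable {u : ℕ → ℝ} {a b : ℝ}

lemma sub_fixedPoint_le_pow_mul (ha : 0 ≤ a) (ha1 : a < 1) (hu : ∀ n, u (n + 1) ≤ a * u n + b)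
    (n : ℕ) : u n - b / (1 - a) ≤ a ^ n * (u 0 - b / (1 - a)) := by
  have hfix : b / (1 - a) = a * (b / (1 - a)) + b := by
    field_simp [(sub_pos.2 ha1).ne']
    ring
  induction n with
  | zero => simp
  | succ n ih =>
    calc u (n + 1) - b / (1 - a) ≤ a * (u n - b / (1 - a)) := by linarith [hu n]
      _ ≤ a * (a ^ n * (u 0 - b / (1 - a))) := mul_le_mul_of_nonneg_left ih ha
      _ = a ^ (n + 1) * (u 0 - b / (1 - a)) := by ring

lemma limsup_le_of_le_mul_add (ha : 0 ≤ a) (ha1 : a < 1) (hu0 : ∀ n, 0 ≤ u n)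
    (hu : ∀ n, u (n + 1) ≤ a * u n + b) : limsup u atTop ≤ b / (1 - a) := by
  set v : ℕ → ℝ := fun n => a ^ n * (u 0 - b / (1 - a)) + b / (1 - a)
  have huv : ∀ n, u n ≤ v n := fun n => by
    linarith [sub_fixedPoint_le_pow_mul ha ha1 hu n]
  have hv : Tendsto v atTop (nhds (b / (1 - a))) := by
    simpa using ((tendsto_pow_atTop_nhds_zero_of_lt_one ha ha1).mul_const
      (u 0 - b / (1 - a))).add_const (b / (1 - a))
  calc limsup u atTop ≤ limsup v atTop :=
        limsup_le_limsup (Eventually.of_forall huv) (isCoboundedUnder_le_of_le atTop hu0)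
          hv.isBoundedUnder_le
    _ = b / (1 - a) := hv.limsup_eq

end AffineRecursion

lemma delay_map_step_le {β c₁ c₂ μa : ℝ} (hβ : 0 < β) (hc₁ : 0 < c₁) (hc₂ : 0 < c₂)
    {y z : ℝ} (hy : 0 ≤ y) (hz : 0 ≤ z) :
    (1 - μa) * z + β * y * exp (-c₁ * y - c₂ * z) ≤ (1 - μa) * z + β / (exp 1 * c₁) := by
  have hsplit : exp (-c₁ * y - c₂ * z) = exp (-(c₁ * y)) * exp (-(c₂ * z)) := by
    rw [← exp_add]; ring_nf
  have hdamp : exp (-(c₂ * z)) ≤ 1 := exp_le_one_iff.2 (by nlinarith)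
  gcongr
  calc β * y * exp (-c₁ * y - c₂ * z) = β * (y * exp (-(c₁ * y)) * exp (-(c₂ * z))) := by
        rw [hsplit]; ring
    _ ≤ β * (1 / (exp 1 * c₁) * 1) := by
        have : 0 ≤ y * exp (-(c₁ * y)) := by positivity
        gcongr
        exact mul_exp_neg_mul_le hc₁ y
    _ = β / (exp 1 * c₁) := by ring

theorem stmt_15 (β c₁ c₂ μa : ℝ)
    (hβ : 0 < β) (hc₁ : 0 < c₁) (hc₂ : 0 < c₂) (hμa : μa ∈ Set.Ioo (0:ℝ) 1)
    (x : ℕ → ℝ) (hxnn : ∀ t, 0 ≤ x t)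
    (hrec : ∀ t, x (t + 4) = (1 - μa) * x (t + 3) +
      β * x t * Real.exp (-c₁ * x t - c₂ * x (t + 3))) :
    Filter.limsup x Filter.atTop ≤ β / (Real.exp 1 * c₁ * μa) := by
  obtain ⟨hμ0, hμ1⟩ := hμa
  have hstep : ∀ n, x (n + 1 + 3) ≤ (1 - μa) * x (n + 3) + β / (exp 1 * c₁) := fun n => by
    rw [show n + 1 + 3 = n + 4 by ring, hrec]
    exact delay_map_step_le hβ hc₁ hc₂ (hxnn n) (hxnn (n + 3))
  have h := limsup_le_of_le_mul_add (u := fun n => x (n + 3)) (by linarith) (by linarith)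
    (fun n => hxnn (n + 3)) hstep
  rwa [limsup_nat_add, sub_sub_cancel, div_div] at h
end

section
/- Let F(u, v, w, z) = (1-μ_a)·u + β·z·exp(-c₁z - c₂u) with β > 0, c₁, c₂ > 0, μ_a ∈ (0,1), and suppose β < min{e·μ_a, e·c₁(1-μ_a)/c₂}. Then on the region D = (0, 1/c₁)⁴, F is nondecreasing in each of its arguments; specifically ∂F/∂u = (1-μ_a) - β·c₂·z·exp(-c₁z - c₂u) ≥ 0 and ∂F/∂z = β(1 - c₁z)·exp(-c₁z - c₂u) ≥ 0 for (u,v,w,z) ∈ D. -/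
open Real Set

lemma texp_aux (t : ℝ) : t * Real.exp (-t) ≤ Real.exp (-1) := by
  have h := Real.add_one_le_exp (t - 1)
  have h2 : Real.exp (t - 1) = Real.exp t * Real.exp (-1) := by
    rw [← Real.exp_add]; ring_nf
  have h3 : Real.exp (-t) * Real.exp t = 1 := by rw [← Real.exp_add]; simp
  nlinarith [Real.exp_pos t, Real.exp_pos (-t), Real.exp_pos (-1)]

lemma key_aux (β c₁ c₂ μa u z : ℝ) (hβ : 0 < β) (hc₁ : 0 < c₁) (hc₂ : 0 < c₂)
    (hz : 0 ≤ z) (hu : 0 ≤ u)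
    (hβ2 : β < Real.exp 1 * c₁ * (1 - μa) / c₂) :
    β * c₂ * z * Real.exp (-c₁ * z - c₂ * u) ≤ 1 - μa := by
  have h1 := texp_aux (c₁ * z)
  have h2 : Real.exp (-c₁ * z - c₂ * u) ≤ Real.exp (-(c₁ * z)) :=
    Real.exp_le_exp.2 (by nlinarith)
  have hE : Real.exp (-1) * Real.exp 1 = 1 := by rw [← Real.exp_add]; simp
  have hβc : β * c₂ < Real.exp 1 * c₁ * (1 - μa) := (lt_div_iff₀ hc₂).mp hβ2
  have hβ3 : β * c₂ * Real.exp (-1) < c₁ * (1 - μa) := by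
    have h5 : Real.exp 1 * c₁ * (1 - μa) * Real.exp (-1) = c₁ * (1 - μa) := by
      have h4 : Real.exp 1 * Real.exp (-1) = 1 := by rw [← Real.exp_add]; simp
      linear_combination c₁ * (1 - μa) * h4
    nlinarith [mul_lt_mul_of_pos_right hβc (Real.exp_pos (-1))]
  have hA : β * c₂ * z * Real.exp (-c₁ * z - c₂ * u) ≤ β * c₂ * z * Real.exp (-(c₁ * z)) := by
    have : 0 ≤ β * c₂ * z := by positivity
    nlinarith
  have hB : β * c₂ * (c₁ * z * Real.exp (-(c₁ * z))) ≤ β * c₂ * Real.exp (-1) :=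
    mul_le_mul_of_nonneg_left h1 (by positivity)
  nlinarith [Real.exp_pos (-(c₁ * z))]

theorem stmt_16 (β c₁ c₂ μa : ℝ)
    (hβ : 0 < β) (hc₁ : 0 < c₁) (hc₂ : 0 < c₂) (hμa : μa ∈ Set.Ioo (0:ℝ) 1)
    (hβsmall : β < min (Real.exp 1 * μa) (Real.exp 1 * c₁ * (1 - μa) / c₂))
    (F : ℝ → ℝ → ℝ → ℝ → ℝ)
    (hF : ∀ u v w z, F u v w z = (1 - μa) * u + β * z * Real.exp (-c₁ * z - c₂ * u)) :
    ∀ u ∈ Ioo (0:ℝ) (1 / c₁), ∀ v ∈ Ioo (0:ℝ) (1 / c₁), ∀ w ∈ Ioo (0:ℝ) (1 / c₁),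
      ∀ z ∈ Ioo (0:ℝ) (1 / c₁),
      (∀ u' ∈ Ioo (0:ℝ) (1 / c₁), u ≤ u' → F u v w z ≤ F u' v w z) ∧
      (∀ v' ∈ Ioo (0:ℝ) (1 / c₁), v ≤ v' → F u v w z ≤ F u v' w z) ∧
      (∀ w' ∈ Ioo (0:ℝ) (1 / c₁), w ≤ w' → F u v w z ≤ F u v w' z) ∧
      (∀ z' ∈ Ioo (0:ℝ) (1 / c₁), z ≤ z' → F u v w z ≤ F u v w z') ∧
      0 ≤ (1 - μa) - β * c₂ * z * Real.exp (-c₁ * z - c₂ * u) ∧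
      0 ≤ β * (1 - c₁ * z) * Real.exp (-c₁ * z - c₂ * u) := by
  obtain ⟨hμa0, hμa1⟩ := hμa
  have hβ2 : β < Real.exp 1 * c₁ * (1 - μa) / c₂ := lt_of_lt_of_le hβsmall (min_le_right _ _)
  intro u hu v hv w hw z hz
  obtain ⟨hu0, hu1⟩ := hu
  obtain ⟨hz0, hz1⟩ := hz
  have hkey := key_aux β c₁ c₂ μa u z hβ hc₁ hc₂ hz0.le hu0.le hβ2
  refine ⟨?_, ?_, ?_, ?_, by linarith, ?_⟩
  · -- monotone in u
    intro u' hu' huu'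
    have hkey' := key_aux β c₁ c₂ μa u z hβ hc₁ hc₂ hz0.le hu0.le hβ2
    rw [hF, hF]
    have hsplit : Real.exp (-c₁ * z - c₂ * u') =
        Real.exp (-c₁ * z - c₂ * u) * Real.exp (-(c₂ * (u' - u))) := by
      rw [← Real.exp_add]; ring_nf
    have hexp : 1 - c₂ * (u' - u) ≤ Real.exp (-(c₂ * (u' - u))) := by
      have := Real.add_one_le_exp (-(c₂ * (u' - u))); linarith
    have hEpos : (0:ℝ) < Real.exp (-c₁ * z - c₂ * u) := Real.exp_pos _
    have hd : β * z * Real.exp (-c₁ * z - c₂ * u) - β * z * Real.exp (-c₁ * z - c₂ * u') ≤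
        β * c₂ * z * Real.exp (-c₁ * z - c₂ * u) * (u' - u) := by
      rw [hsplit]
      have hβz : 0 ≤ β * z := by positivity
      nlinarith [mul_le_mul_of_nonneg_left hexp (mul_nonneg hβz hEpos.le)]
    nlinarith [mul_le_mul_of_nonneg_right hkey' (by linarith : (0:ℝ) ≤ u' - u)]
  · intro v' _ _; rw [hF, hF]
  · intro w' _ _; rw [hF, hF]
  · -- monotone in z
    intro z' hz' hzz'
    obtain ⟨hz'0, hz'1⟩ := hz'
    rw [hF, hF]
    have hsplit : Real.exp (-c₁ * z' - c₂ * u) =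
        Real.exp (-c₁ * z - c₂ * u) * Real.exp (-(c₁ * (z' - z))) := by
      rw [← Real.exp_add]; ring_nf
    have hexp : 1 - c₁ * (z' - z) ≤ Real.exp (-(c₁ * (z' - z))) := by
      have := Real.add_one_le_exp (-(c₁ * (z' - z))); linarith
    have hEpos : (0:ℝ) < Real.exp (-c₁ * z - c₂ * u) := Real.exp_pos _
    have hzc : z' * (1 - c₁ * (z' - z)) ≥ z := by
      have h1 : c₁ * z' < 1 := by
        have := (lt_div_iff₀ hc₁).mp hz'1; linarith
      nlinarith
    have : z * Real.exp (-c₁ * z - c₂ * u) ≤ z' * Real.exp (-c₁ * z' - c₂ * u) := by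
      rw [hsplit]
      nlinarith [mul_le_mul_of_nonneg_right hzc.le hEpos.le,
        mul_le_mul_of_nonneg_left hexp
          (by positivity : (0:ℝ) ≤ z' * Real.exp (-c₁ * z - c₂ * u))]
    nlinarith
  · -- partial z nonneg
    have h1 : c₁ * z < 1 := by
      have := (lt_div_iff₀ hc₁).mp hz1; linarith
    have := Real.exp_pos (-c₁ * z - c₂ * u)
    exact mul_nonneg (mul_nonneg hβ.le (by linarith)) this.le
end

section
/- For the LPAA model with c₂ = 0 and R₀ = b(1-μ_l)(1-μ_p)/μ_a satisfying 1 < R₀ < e, every solution of the associated delay equation x_{t+1} = (1-μ_a)x_t + β·x_{t-3}·exp(-c₁x_{t-3}) with strictly positive initial history converges to x* = (1/c₁)·ln R₀, where β = b(1-μ_l)(1-μ_p). -/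
/-!
With `R₀ = β / μa` the equation reads `x (t+4) = (1 - μa) x (t+3) + μa h (x t)`, a
convex combination of the previous value and of the Ricker map `h y = R₀ y e^{-c₁ y}` at the
delayed value. Since `h ≤ R₀ / (c₁ e) < 1 / c₁`, the solution eventually stays in `(0, 1/c₁]`,
where `h` is increasing; there `h y ≥ min y x*`, which keeps the solution away from `0`.
Passing to the limit superior `L` and limit inferior `l` in the recurrence gives `L ≤ h L` and
`h l ≤ l`, and for positive arguments these say `L ≤ x* ≤ l`.
-/

open Real Filter Set Topology

lemma eventually_le_add_of_le_convex_comb {a C ε : ℝ} {y : ℕ → ℝ} (ha : 0 < a)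
    (ha1 : a ≤ 1) (hε : 0 < ε) (h : ∀ᶠ t in atTop, y (t + 1) ≤ (1 - a) * y t + a * C) :
    ∀ᶠ t in atTop, y t ≤ C + ε := by
  obtain ⟨T, hT⟩ := eventually_atTop.1 h
  have hgeom : ∀ n, y (T + n) - C ≤ (1 - a) ^ n * |y T - C| := by
    intro n
    induction n with
    | zero => simpa using le_abs_self (y T - C)
    | succ n ih =>
      calc y (T + (n + 1)) - C ≤ (1 - a) * (y (T + n) - C) := by
            rw [← add_assoc]; linarith [hT (T + n) (Nat.le_add_right _ _)]
        _ ≤ (1 - a) * ((1 - a) ^ n * |y T - C|) := by gcongr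
        _ = (1 - a) ^ (n + 1) * |y T - C| := by ring
  have hsmall : ∀ᶠ n in atTop, (1 - a) ^ n * |y T - C| < ε := by
    refine (tendsto_order.1 ?_).2 ε hε
    simpa using (tendsto_pow_atTop_nhds_zero_of_lt_one (by linarith) (by linarith)).mul_const
      |y T - C|
  rw [← map_add_atTop_eq_nat T, eventually_map]
  filter_upwards [hsmall] with n hn
  linarith [add_comm n T ▸ hgeom n]

section DelayRecurrence

variable {a : ℝ} {H : ℝ → ℝ} {k : ℕ} {x : ℕ → ℝ}

lemma mem_of_delayRec_of_convex {S : Set ℝ} (hS : Convex ℝ S) (ha0 : 0 ≤ a) (ha1 : a ≤ 1)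
    (hx : ∀ t, x (t + k + 1) = (1 - a) * x (t + k) + a * H (x t)) (T : ℕ)
    (hinit : ∀ i ≤ k, x (T + i) ∈ S) (hH : ∀ n, x (T + n) ∈ S → H (x (T + n)) ∈ S) :
    ∀ n, x (T + n) ∈ S := by
  intro n
  induction n using Nat.strong_induction_on with
  | _ n ih =>
    rcases le_or_gt n k with hn | hn
    · exact hinit n hn
    · obtain ⟨m, rfl⟩ := Nat.exists_eq_add_of_lt hn
      have hlast : x (T + m + k) ∈ S := by rw [add_assoc]; exact ih _ (by omega)
      have hfirst : H (x (T + m)) ∈ S := hH m (ih m (by omega))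
      rw [add_comm k m, ← add_assoc, ← add_assoc, hx]
      exact hS hlast hfirst (by linarith) ha0 (by ring)

lemma eventually_le_add_of_delayRec {C ε : ℝ} (ha : 0 < a) (ha1 : a ≤ 1) (hε : 0 < ε)
    (hx : ∀ t, x (t + k + 1) = (1 - a) * x (t + k) + a * H (x t))
    (hC : ∀ᶠ t in atTop, H (x t) ≤ C) : ∀ᶠ t in atTop, x t ≤ C + ε := by
  refine eventually_le_add_of_le_convex_comb ha ha1 hε ?_
  rw [← map_add_atTop_eq_nat k, eventually_map]
  filter_upwards [hC] with t ht
  rw [hx]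
  gcongr

lemma eventually_sub_le_of_delayRec {C ε : ℝ} (ha : 0 < a) (ha1 : a ≤ 1) (hε : 0 < ε)
    (hx : ∀ t, x (t + k + 1) = (1 - a) * x (t + k) + a * H (x t))
    (hC : ∀ᶠ t in atTop, C ≤ H (x t)) : ∀ᶠ t in atTop, C - ε ≤ x t := by
  have hneg := eventually_le_add_of_delayRec (x := -x) (H := fun y ↦ -H (-y)) (k := k) (C := -C)
    ha ha1 hε (fun t ↦ by simp only [Pi.neg_apply, neg_neg, hx]; ring) (by simpa using hC)
  filter_upwards [hneg] with t ht
  simp only [Pi.neg_apply] at ht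
  linarith

lemma limsup_le_of_delayRec {C : ℝ} (ha : 0 < a) (ha1 : a ≤ 1)
    (hx : ∀ t, x (t + k + 1) = (1 - a) * x (t + k) + a * H (x t))
    (hcobdd : IsCoboundedUnder (· ≤ ·) atTop x) (hC : ∀ᶠ t in atTop, H (x t) ≤ C) :
    limsup x atTop ≤ C :=
  le_of_forall_pos_le_add fun _ hε ↦
    limsup_le_of_le hcobdd (eventually_le_add_of_delayRec ha ha1 hε hx hC)

lemma le_liminf_of_delayRec {C : ℝ} (ha : 0 < a) (ha1 : a ≤ 1)
    (hx : ∀ t, x (t + k + 1) = (1 - a) * x (t + k) + a * H (x t))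
    (hcobdd : IsCoboundedUnder (· ≥ ·) atTop x) (hC : ∀ᶠ t in atTop, C ≤ H (x t)) :
    C ≤ liminf x atTop :=
  le_of_forall_pos_le_add fun _ hε ↦ by
    linarith [le_liminf_of_le hcobdd (eventually_sub_le_of_delayRec ha ha1 hε hx hC)]

lemma limsup_le_map_limsup_of_delayRec {m K : ℝ} (ha : 0 < a) (ha1 : a ≤ 1)
    (hx : ∀ t, x (t + k + 1) = (1 - a) * x (t + k) + a * H (x t))
    (hmono : MonotoneOn H (Icc m K)) (hcont : ContinuousAt H (limsup x atTop))
    (hm : ∀ᶠ t in atTop, m ≤ x t) (hbdd : IsBoundedUnder (· ≤ ·) atTop x)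
    (hK : limsup x atTop < K) : limsup x atTop ≤ H (limsup x atTop) := by
  set L := limsup x atTop
  have hcobdd : IsCoboundedUnder (· ≤ ·) atTop x :=
    (isBoundedUnder_of_eventually_ge hm).isCoboundedUnder_le
  have hbelow : ∀ z ∈ Ioo L K, L ≤ H z := by
    intro z ⟨hLz, hzK⟩
    have hlt : ∀ᶠ t in atTop, x t < z := eventually_lt_of_limsup_lt hLz hbdd
    have hmz : m ≤ z := by
      obtain ⟨t, hmt, hzt⟩ := (hm.and hlt).exists
      linarith
    refine limsup_le_of_delayRec ha ha1 hx hcobdd ?_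
    filter_upwards [hm, hlt] with t hmt hzt
    exact hmono ⟨hmt, by linarith⟩ ⟨hmz, hzK.le⟩ hzt.le
  exact ge_of_tendsto (hcont.tendsto.mono_left nhdsWithin_le_nhds)
    (mem_of_superset (Ioo_mem_nhdsGT hK) hbelow)

lemma map_liminf_le_liminf_of_delayRec {m K : ℝ} (ha : 0 < a) (ha1 : a ≤ 1)
    (hx : ∀ t, x (t + k + 1) = (1 - a) * x (t + k) + a * H (x t))
    (hmono : MonotoneOn H (Icc m K)) (hcont : ContinuousAt H (liminf x atTop))
    (hK : ∀ᶠ t in atTop, x t ≤ K) (hbdd : IsBoundedUnder (· ≥ ·) atTop x)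
    (hm : m < liminf x atTop) : H (liminf x atTop) ≤ liminf x atTop := by
  set l := liminf x atTop
  have hcobdd : IsCoboundedUnder (· ≥ ·) atTop x :=
    (isBoundedUnder_of_eventually_le hK).isCoboundedUnder_ge
  have habove : ∀ z ∈ Ioo m l, H z ≤ l := by
    intro z ⟨hmz, hzl⟩
    have hgt : ∀ᶠ t in atTop, z < x t := eventually_lt_of_lt_liminf hzl hbdd
    have hzK : z ≤ K := by
      obtain ⟨t, htK, hzt⟩ := (hK.and hgt).exists
      linarith
    refine le_liminf_of_delayRec ha ha1 hx hcobdd ?_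
    filter_upwards [hK, hgt] with t htK hzt
    exact hmono ⟨hmz.le, hzK⟩ ⟨by linarith, htK⟩ hzt.le
  exact le_of_tendsto (hcont.tendsto.mono_left nhdsWithin_le_nhds)
    (mem_of_superset (Ioo_mem_nhdsLT hm) habove)

end DelayRecurrence

lemma monotoneOn_mul_exp_neg : MonotoneOn (fun y ↦ y * exp (-y)) (Icc 0 1) := by
  refine monotoneOn_of_deriv_nonneg (convex_Icc 0 1) (by fun_prop) (by fun_prop) ?_
  intro y hy
  rw [interior_Icc] at hy
  have hd : HasDerivAt (fun y ↦ y * exp (-y)) ((1 - y) * exp (-y)) y := by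
    exact ((hasDerivAt_id' y).fun_mul (hasDerivAt_neg' y).exp).congr_deriv (by ring)
  rw [hd.deriv]
  exact mul_nonneg (by linarith [hy.2]) (exp_pos _).le

noncomputable def ricker (R c y : ℝ) : ℝ := R * y * exp (-c * y)

section Ricker

variable {R c y : ℝ}

lemma continuous_ricker : Continuous (ricker R c) := by
  unfold ricker; fun_prop

lemma ricker_pos (hR : 0 < R) (hy : 0 < y) : 0 < ricker R c y := by
  unfold ricker; positivity

lemma ricker_eq_mul_exp (hR : 0 < R) : ricker R c y = y * exp (log R - c * y) := by
  rw [ricker, exp_sub, exp_log hR, neg_mul, exp_neg]; ring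

lemma ricker_eq_div_mul (hc : 0 < c) : ricker R c y = R / c * (c * y * exp (-(c * y))) := by
  rw [ricker]; field_simp

lemma ricker_le (hR : 0 ≤ R) (hc : 0 < c) : ricker R c y ≤ R * exp (-1) / c := by
  rw [ricker_eq_div_mul hc]
  calc R / c * (c * y * exp (-(c * y))) ≤ R / c * exp (-1) := by
        gcongr; exact mul_exp_neg_le_exp_neg_one _
    _ = R * exp (-1) / c := by ring

lemma ricker_monotoneOn (hR : 0 ≤ R) (hc : 0 < c) : MonotoneOn (ricker R c) (Icc 0 (1 / c)) := by
  intro s ⟨hs0, hs1⟩ t ⟨ht0, ht1⟩ hst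
  have hcs : c * s ∈ Icc (0 : ℝ) 1 := ⟨by positivity, by rwa [← le_div_iff₀' hc]⟩
  have hct : c * t ∈ Icc (0 : ℝ) 1 := ⟨by positivity, by rwa [← le_div_iff₀' hc]⟩
  rw [ricker_eq_div_mul hc, ricker_eq_div_mul hc]
  exact mul_le_mul_of_nonneg_left (monotoneOn_mul_exp_neg hcs hct (by gcongr)) (by positivity)

lemma ricker_log_div (hR : 0 < R) (hc : 0 < c) : ricker R c (log R / c) = log R / c := by
  rw [ricker_eq_mul_exp hR, mul_div_cancel₀ _ hc.ne', sub_self, exp_zero, mul_one]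

lemma le_log_div_of_le_ricker (hR : 0 < R) (hc : 0 < c) (hy : 0 < y) (h : y ≤ ricker R c y) :
    y ≤ log R / c := by
  rw [ricker_eq_mul_exp hR, le_mul_iff_one_le_right hy, one_le_exp_iff] at h
  rw [le_div_iff₀ hc]; linarith

lemma log_div_le_of_ricker_le (hR : 0 < R) (hc : 0 < c) (hy : 0 < y) (h : ricker R c y ≤ y) :
    log R / c ≤ y := by
  rw [ricker_eq_mul_exp hR, mul_le_iff_le_one_right hy, exp_le_one_iff] at h
  rw [div_le_iff₀ hc]; linarith

lemma min_le_ricker (hR1 : 1 ≤ R) (hRe : R ≤ exp 1) (hc : 0 < c) (hy0 : 0 ≤ y)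
    (hy1 : y ≤ 1 / c) : min y (log R / c) ≤ ricker R c y := by
  have hR : 0 < R := by linarith
  rcases le_total y (log R / c) with hy | hy
  · rw [min_eq_left hy, ricker_eq_mul_exp hR]
    refine le_mul_of_one_le_right hy0 (one_le_exp ?_)
    rw [le_div_iff₀ hc] at hy; linarith
  · have hlog : log R / c ∈ Icc 0 (1 / c) := by
      refine ⟨div_nonneg (log_nonneg hR1) hc.le, div_le_div_of_nonneg_right ?_ hc.le⟩
      simpa using log_le_log hR hRe
    rw [min_eq_right hy, ← ricker_log_div hR hc]
    exact ricker_monotoneOn hR.le hc hlog ⟨hy0, hy1⟩ hy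

end Ricker

lemma exists_pos_eventually_le_of_rickerDelay {a R c : ℝ} {k : ℕ} {x : ℕ → ℝ}
    (ha0 : 0 ≤ a) (ha1 : a ≤ 1) (hR1 : 1 < R) (hRe : R ≤ exp 1) (hc : 0 < c)
    (hx : ∀ t, x (t + k + 1) = (1 - a) * x (t + k) + a * ricker R c (x t))
    (hpos : ∀ t, 0 < x t) (hK : ∀ᶠ t in atTop, x t ≤ 1 / c) :
    ∃ δ > 0, ∀ᶠ t in atTop, δ ≤ x t := by
  obtain ⟨T, hT⟩ := eventually_atTop.1 hK
  obtain ⟨i₀, -, hi₀⟩ :=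
    (Finset.range (k + 1)).exists_min_image (fun i ↦ x (T + i)) ⟨0, by simp⟩
  set δ := min (x (T + i₀)) (log R / c)
  have hinv : ∀ n, x (T + n) ∈ Ici δ :=
    mem_of_delayRec_of_convex (convex_Ici δ) ha0 ha1 hx T
      (fun i hi ↦ (min_le_left _ _).trans (hi₀ i (Finset.mem_range_succ_iff.2 hi)))
      (fun n hn ↦ (le_min hn (min_le_right _ _)).trans
        (min_le_ricker hR1.le hRe hc (hpos _).le (hT _ (Nat.le_add_right _ _))))
  refine ⟨δ, lt_min (hpos _) (div_pos (log_pos hR1) hc),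
    eventually_atTop.2 ⟨T, fun t ht ↦ ?_⟩⟩
  obtain ⟨n, rfl⟩ := Nat.exists_eq_add_of_le ht
  exact hinv n

theorem tendsto_log_div_of_rickerDelay {a R c : ℝ} {k : ℕ} {x : ℕ → ℝ} (ha0 : 0 < a)
    (ha1 : a ≤ 1) (hR1 : 1 < R) (hRe : R < exp 1) (hc : 0 < c)
    (hx : ∀ t, x (t + k + 1) = (1 - a) * x (t + k) + a * ricker R c (x t))
    (hinit : ∀ i ≤ k, 0 < x i) : Tendsto x atTop (𝓝 (log R / c)) := by
  have hR : 0 < R := by linarith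
  have hpos : ∀ t, 0 < x t := by
    simpa using mem_of_delayRec_of_convex (convex_Ioi 0) ha0.le ha1 hx 0 (by simpa using hinit)
      (fun _ hn ↦ ricker_pos hR hn)
  -- `R < e` puts the maximum of the Ricker map below the end of its increasing range.
  have hM : R * exp (-1) / c < 1 / c := by
    gcongr
    rwa [exp_neg, ← div_eq_mul_inv, div_lt_one (exp_pos 1)]
  obtain ⟨B, hMB, hB⟩ := exists_between hM
  have hxB : ∀ᶠ t in atTop, x t ≤ B := by
    simpa using eventually_le_add_of_delayRec ha0 ha1 (sub_pos.2 hMB) hx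
      (Eventually.of_forall fun t ↦ ricker_le hR.le hc)
  have hx0 : ∀ᶠ t in atTop, 0 ≤ x t := Eventually.of_forall fun t ↦ (hpos t).le
  have hbddAbove : IsBoundedUnder (· ≤ ·) atTop x := isBoundedUnder_of_eventually_le hxB
  have hbddBelow : IsBoundedUnder (· ≥ ·) atTop x := isBoundedUnder_of_eventually_ge hx0
  have hxK : ∀ᶠ t in atTop, x t ≤ 1 / c := hxB.mono fun t ht ↦ ht.trans hB.le
  obtain ⟨δ, hδ, hxδ⟩ :=
    exists_pos_eventually_le_of_rickerDelay ha0.le ha1 hR1 hRe.le hc hx hpos hxK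
  have hlL := liminf_le_limsup hbddAbove hbddBelow
  have hl : 0 < liminf x atTop :=
    hδ.trans_le (le_liminf_of_le hbddAbove.isCoboundedUnder_ge hxδ)
  have hLB : limsup x atTop < 1 / c :=
    (limsup_le_of_le hbddBelow.isCoboundedUnder_le hxB).trans_lt hB
  have hL : limsup x atTop ≤ log R / c :=
    le_log_div_of_le_ricker hR hc (hl.trans_le hlL) <|
      limsup_le_map_limsup_of_delayRec ha0 ha1 hx (ricker_monotoneOn hR.le hc)
        continuous_ricker.continuousAt hx0 hbddAbove hLB
  have hl' : log R / c ≤ liminf x atTop :=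
    log_div_le_of_ricker_le hR hc hl <| map_liminf_le_liminf_of_delayRec ha0 ha1 hx
      (ricker_monotoneOn hR.le hc) continuous_ricker.continuousAt hxK hbddBelow hl
  exact tendsto_of_liminf_eq_limsup (le_antisymm (hlL.trans hL) hl')
    (le_antisymm hL (hl'.trans hlL)) hbddAbove hbddBelow

theorem stmt_19_general (c₁ μa : ℝ)
    (hc₁ : 0 < c₁)
    (hμa : μa ∈ Set.Ioo (0:ℝ) 1)
    (β R₀ : ℝ) (hR₀def : R₀ = β / μa)
    (hR₀ : 1 < R₀) (hR₀e : R₀ < Real.exp 1)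
    (x : ℕ → ℝ)
    (hpos : 0 < x 0 ∧ 0 < x 1 ∧ 0 < x 2 ∧ 0 < x 3)
    (hrec : ∀ t, x (t + 4) = (1 - μa) * x (t + 3) + β * x t * Real.exp (-c₁ * x t)) :
    Tendsto x atTop (nhds ((1 / c₁) * Real.log R₀)) := by
  have hβ : β = μa * R₀ := by rw [hR₀def, mul_div_cancel₀ _ hμa.1.ne']
  have hx : ∀ t, x (t + 3 + 1) = (1 - μa) * x (t + 3) + μa * ricker R₀ c₁ (x t) := by
    intro t; rw [hrec t, hβ, ricker]; ring
  have hinit : ∀ i ≤ 3, 0 < x i := by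
    intro i hi
    interval_cases i <;> simp [hpos]
  rw [one_div_mul_eq_div]
  exact tendsto_log_div_of_rickerDelay hμa.1 hμa.2.le hR₀ hR₀e hc₁ hx hinit

theorem stmt_19 (b c₁ μl μp μa : ℝ)
    (hb : 0 < b) (hc₁ : 0 < c₁)
    (hμl : μl ∈ Set.Ioo (0:ℝ) 1) (hμp : μp ∈ Set.Ioo (0:ℝ) 1) (hμa : μa ∈ Set.Ioo (0:ℝ) 1)
    (β R₀ : ℝ) (hβ : β = b * (1 - μl) * (1 - μp)) (hR₀def : R₀ = β / μa)
    (hR₀ : 1 < R₀) (hR₀e : R₀ < Real.exp 1)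
    (x : ℕ → ℝ)
    (hpos : 0 < x 0 ∧ 0 < x 1 ∧ 0 < x 2 ∧ 0 < x 3)
    (hrec : ∀ t, x (t + 4) = (1 - μa) * x (t + 3) + β * x t * Real.exp (-c₁ * x t)) :
    Tendsto x atTop (nhds ((1 / c₁) * Real.log R₀)) :=
  stmt_19_general c₁ μa hc₁ hμa β R₀ hR₀def hR₀ hR₀e x hpos hrec
end
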